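/- arXiv:1612.09176 — 8 statements merged into one kernel-verified Lean document; each statement's English description precedes it below -/
import Mathlib

section
/- Let m be a nonzero ideal of the ring of integers O of a number field K. Then the quotient ring O/m is a Euclidean ring with respect to the function φ(ā) = N((a) + m): for all a, b ∈ O with b ∉ m, there exist q, r ∈ O such that a - (q·b + r) ∈ m, and either r ∈ m or N((r) + m) < N((b) + m). -/
/-!
Write `m = ∏ P ^ e_P`. Both membership in `I ⊔ m` and the norm `N(I ⊔ m)` are computed
componentwise from the ideals `I ⊔ P ^ e_P`, and the ideals containing `P ^ e_P` form a chain.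
So for `a ∉ (b) + m`, in each component either `a ∈ (b) + P ^ e_P`, where `b` is a remainder, or
`(b) + P ^ e_P ⊊ (a) + P ^ e_P`, where `a` is a remainder of strictly smaller norm; the latter
happens for at least one `P`. The Chinese remainder theorem glues these local remainders to `r`.
-/

open NumberField UniqueFactorizationMonoid

namespace Ideal

section CommRing

variable {R : Type*} [CommRing R]

theorem sup_mul_eq_sup_mul_sup_of_sup_eq_top (X : Ideal R) {u v : Ideal R} (h : u ⊔ v = ⊤) :
    X ⊔ u * v = (X ⊔ u) * (X ⊔ v) := by
  refine le_antisymm (sup_le ?_ (mul_mono le_sup_right le_sup_right)) ?_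
  · calc X = X * u ⊔ X * v := by rw [← mul_sup, h, mul_top]
      _ ≤ (X ⊔ u) * (X ⊔ v) :=
        sup_le ((mul_comm X u).trans_le (mul_mono le_sup_right le_sup_left))
          (mul_mono le_sup_left le_sup_right)
  · rw [sup_mul, mul_sup u]
    exact sup_le (mul_le_left.trans le_sup_left)
      (sup_le (mul_le_right.trans le_sup_left) le_sup_right)

theorem sup_prod_eq_prod_sup {ι : Type*} (X : Ideal R) (s : Finset ι) (u : ι → Ideal R)
    (h : (s : Set ι).Pairwise fun i j => u i ⊔ u j = ⊤) :
    X ⊔ ∏ i ∈ s, u i = ∏ i ∈ s, (X ⊔ u i) := by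
  induction s using Finset.cons_induction with
  | empty => simp [one_eq_top]
  | cons i s hi ih =>
    rw [Finset.coe_cons, Set.pairwise_insert] at h
    rw [Finset.prod_cons, Finset.prod_cons, ← ih h.1,
      sup_mul_eq_sup_mul_sup_of_sup_eq_top X (sup_prod_eq_top fun j hj =>
        (h.2 j hj (ne_of_mem_of_not_mem hj hi).symm).1)]

theorem span_singleton_sup_eq_of_sub_mem {x y : R} {I : Ideal R} (h : x - y ∈ I) :
    span {x} ⊔ I = span {y} ⊔ I := by
  have key : ∀ {x y : R}, x - y ∈ I → span {x} ⊔ I ≤ span {y} ⊔ I := fun {x y} h =>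
    sup_le ((span_singleton_le_iff_mem _).mpr
      (mem_span_singleton_sup.mpr ⟨1, x - y, h, by ring⟩)) le_sup_right
  exact le_antisymm (key h) (key (neg_sub x y ▸ I.neg_mem h))

end CommRing

section IsDedekindDomain

variable {R : Type*} [CommRing R] [IsDedekindDomain R]

theorem exists_prod_prime_pow_eq {m : Ideal R} (hm : m ≠ ⊥) :
    ∃ (s : Finset (Ideal R)) (e : Ideal R → ℕ),
      (∀ P ∈ s, Prime P) ∧ ∏ P ∈ s, P ^ e P = m := by
  classical
  refine ⟨(normalizedFactors m).toFinset, fun P => (normalizedFactors m).count P,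
    fun P hP => prime_of_normalized_factor P (Multiset.mem_toFinset.mp hP), ?_⟩
  rw [← Finset.prod_multiset_count]
  exact associated_iff_eq.mp (prod_normalizedFactors hm)

theorem le_total_of_prime_pow_le {P I J : Ideal R} (hP : Prime P) {e : ℕ}
    (hI : P ^ e ≤ I) (hJ : P ^ e ≤ J) : I ≤ J ∨ J ≤ I := by
  obtain ⟨i, -, hi⟩ := (dvd_prime_pow hP e).mp (dvd_iff_le.mpr hI)
  obtain ⟨j, -, hj⟩ := (dvd_prime_pow hP e).mp (dvd_iff_le.mpr hJ)
  rw [associated_iff_eq.mp hi, associated_iff_eq.mp hj]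
  exact (le_total j i).imp (pow_le_pow_right ·) (pow_le_pow_right ·)

theorem span_singleton_sup_lt_of_notMem {P : Ideal R} (hP : Prime P) (e : ℕ) {a b : R}
    (ha : a ∉ span {b} ⊔ P ^ e) : span {b} ⊔ P ^ e < span {a} ⊔ P ^ e := by
  have hnot : ¬span {a} ⊔ P ^ e ≤ span {b} ⊔ P ^ e := fun h =>
    ha (h (mem_sup_left (mem_span_singleton_self a)))
  exact lt_of_le_not_ge ((le_total_of_prime_pow_le hP le_sup_right le_sup_right).resolve_right
    hnot) hnot

variable {s : Finset (Ideal R)} {e : Ideal R → ℕ}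

theorem sup_prod_prime_pow (hs : ∀ P ∈ s, Prime P) (X : Ideal R) :
    X ⊔ ∏ P ∈ s, P ^ e P = ∏ P ∈ s, (X ⊔ P ^ e P) := by
  refine sup_prod_eq_prod_sup X s _ fun P hP Q hQ hPQ => pow_sup_pow_eq_top ?_
  have isMaximal {P} (hP : P ∈ s) : P.IsMaximal :=
    (isPrime_of_prime (hs P hP)).isMaximal (hs P hP).ne_zero
  exact (isMaximal hP).coprime_of_ne (isMaximal hQ) hPQ

theorem mem_sup_prod_prime_pow_iff (hs : ∀ P ∈ s, Prime P) {x : R} {X : Ideal R} :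
    x ∈ X ⊔ ∏ P ∈ s, P ^ e P ↔ ∀ P ∈ s, x ∈ X ⊔ P ^ e P := by
  refine ⟨fun hx P hP => ?_, fun hx => ?_⟩
  · exact sup_le_sup_left (le_of_dvd (Finset.dvd_prod_of_mem (fun P => P ^ e P) hP)) X hx
  have : span {x} ⊔ (X ⊔ ∏ P ∈ s, P ^ e P) = X ⊔ ∏ P ∈ s, P ^ e P := by
    rw [← sup_assoc, sup_prod_prime_pow hs, sup_prod_prime_pow hs]
    exact Finset.prod_congr rfl fun P hP => by
      rw [sup_assoc, sup_eq_right.mpr ((span_singleton_le_iff_mem _).mpr (hx P hP))]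
  exact this ▸ mem_sup_left (mem_span_singleton_self x)

end IsDedekindDomain

section absNorm

variable {S : Type*} [CommRing S] [IsDedekindDomain S] [Module.Free ℤ S] [Module.Finite ℤ S]

theorem absNorm_le_absNorm_of_le {I J : Ideal S} (hI : I ≠ ⊥) (h : I ≤ J) :
    absNorm J ≤ absNorm I := by
  have := finiteIndex hI
  rw [absNorm_eq_index, absNorm_eq_index]
  exact AddSubgroup.index_antitone (Submodule.toAddSubgroup_mono h)

theorem absNorm_lt_absNorm_of_lt {I J : Ideal S} (hI : I ≠ ⊥) (h : I < J) :
    absNorm J < absNorm I := by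
  have := finiteIndex hI
  rw [absNorm_eq_index, absNorm_eq_index]
  exact AddSubgroup.index_strictAnti (Submodule.toAddSubgroup_strictMono h)

theorem absNorm_sup_prod_prime_pow_lt {s : Finset (Ideal S)} {e : Ideal S → ℕ}
    (hs : ∀ P ∈ s, Prime P) {I J : Ideal S} (hle : ∀ P ∈ s, J ⊔ P ^ e P ≤ I ⊔ P ^ e P)
    (hlt : ∃ P ∈ s, J ⊔ P ^ e P < I ⊔ P ^ e P) :
    absNorm (I ⊔ ∏ P ∈ s, P ^ e P) < absNorm (J ⊔ ∏ P ∈ s, P ^ e P) := by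
  have hne {P} (hP : P ∈ s) (X : Ideal S) : X ⊔ P ^ e P ≠ ⊥ :=
    ne_bot_of_le_ne_bot (pow_ne_zero _ (hs P hP).ne_zero) le_sup_right
  rw [sup_prod_prime_pow hs, sup_prod_prime_pow hs, map_prod, map_prod]
  refine Finset.prod_lt_prod (fun P hP => Nat.pos_of_ne_zero (absNorm_eq_zero_iff.not.mpr
    (hne hP I))) (fun P hP => absNorm_le_absNorm_of_le (hne hP J) (hle P hP)) ?_
  obtain ⟨P, hP, h⟩ := hlt
  exact ⟨P, hP, absNorm_lt_absNorm_of_lt (hne hP J) h⟩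

theorem exists_sub_mem_span_singleton_sup_absNorm_lt {m : Ideal S} (hm : m ≠ ⊥) {a b : S}
    (ha : a ∉ span {b} ⊔ m) :
    ∃ r, a - r ∈ span {b} ⊔ m ∧ absNorm (span {r} ⊔ m) < absNorm (span {b} ⊔ m) := by
  classical
  obtain ⟨s, e, hs, rfl⟩ := exists_prod_prime_pow_eq hm
  let localRemainder (P : Ideal S) : S := if a ∈ span {b} ⊔ P ^ e P then b else a
  have sub_localRemainder_mem (P : Ideal S) : a - localRemainder P ∈ span {b} ⊔ P ^ e P := by
    unfold localRemainder
    split_ifs with h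
    · exact sub_mem h (mem_sup_left (mem_span_singleton_self b))
    · rw [sub_self]
      exact zero_mem _
  obtain ⟨r, hr⟩ := IsDedekindDomain.exists_forall_sub_mem_ideal (s := s) id e hs
    (fun _ _ _ _ => id) fun P => localRemainder P
  have hrP {P} (hP : P ∈ s) : span {r} ⊔ P ^ e P = span {localRemainder P} ⊔ P ^ e P :=
    span_singleton_sup_eq_of_sub_mem (hr P hP)
  refine ⟨r, (mem_sup_prod_prime_pow_iff hs).mpr fun P hP => ?_,
    absNorm_sup_prod_prime_pow_lt hs (fun P hP => ?_) ?_⟩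
  · rw [show a - r = (a - localRemainder P) - (r - localRemainder P) by ring]
    exact sub_mem (sub_localRemainder_mem P) (mem_sup_right (hr P hP))
  · rw [hrP hP]
    unfold localRemainder
    split_ifs with h
    · exact le_rfl
    · exact (span_singleton_sup_lt_of_notMem (hs P hP) _ h).le
  · obtain ⟨P, hP, haP⟩ : ∃ P ∈ s, a ∉ span {b} ⊔ P ^ e P := by
      simpa using mt (mem_sup_prod_prime_pow_iff hs).mpr ha
    refine ⟨P, hP, ?_⟩
    rw [hrP hP, show localRemainder P = a from if_neg haP]
    exact span_singleton_sup_lt_of_notMem (hs P hP) _ haP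

end absNorm

end Ideal

theorem stmt_0_general (K : Type*) [Field K] [NumberField K]
    (m : Ideal (RingOfIntegers K)) (hm : m ≠ ⊥)
    (a b : RingOfIntegers K) :
    ∃ q r : RingOfIntegers K,
      a - (q * b + r) ∈ m ∧
        (r ∈ m ∨
          Ideal.absNorm (Ideal.span {r} ⊔ m) < Ideal.absNorm (Ideal.span {b} ⊔ m)) := by
  by_cases ha : a ∈ Ideal.span {b} ⊔ m
  · obtain ⟨q, t, ht, hqt⟩ := Ideal.mem_span_singleton_sup.mp ha
    exact ⟨q, t, by rw [hqt, sub_self]; exact m.zero_mem, Or.inl ht⟩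
  · obtain ⟨r, har, hr⟩ := Ideal.exists_sub_mem_span_singleton_sup_absNorm_lt hm ha
    obtain ⟨q, t, ht, hqt⟩ := Ideal.mem_span_singleton_sup.mp har
    exact ⟨q, r, by rwa [show a - (q * b + r) = t by linear_combination -hqt], Or.inr hr⟩

theorem stmt_0 (K : Type*) [Field K] [NumberField K]
    (m : Ideal (RingOfIntegers K)) (hm : m ≠ ⊥)
    (a b : RingOfIntegers K) (hb : b ∉ m) :
    ∃ q r : RingOfIntegers K,
      a - (q * b + r) ∈ m ∧
        (r ∈ m ∨
          Ideal.absNorm (Ideal.span {r} ⊔ m) < Ideal.absNorm (Ideal.span {b} ⊔ m)) :=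
  stmt_0_general K m hm a b
end

section
/- Let p be a nonzero prime ideal of the ring of integers O of a number field K and let l ≥ 1. Then the p-adic valuation is a Euclidean function on O/p^l: for all a, b ∈ O with b ∉ p^l, there exist q, r ∈ O such that a - (q·b + r) ∈ p^l, and either r ∈ p^l or v_p(r) < v_p(b). -/
open NumberField

/-- The `p`-adic valuation of an element `x` of the ring of integers:
the largest `n` such that `x ∈ p ^ n`. -/
noncomputable def padicValRingOfIntegers {K : Type*} [Field K] [NumberField K]
    (p : Ideal (RingOfIntegers K)) (x : RingOfIntegers K) : ℕ :=
  sSup {n : ℕ | x ∈ p ^ n}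

theorem stmt_1 (K : Type*) [Field K] [NumberField K]
    (p : Ideal (RingOfIntegers K)) (hp : p ≠ ⊥) (hprime : p.IsPrime)
    (l : ℕ) (hl : 1 ≤ l)
    (a b : RingOfIntegers K) (hb : b ∉ p ^ l) :
    ∃ q r : RingOfIntegers K,
      a - (q * b + r) ∈ p ^ l ∧
        (r ∈ p ^ l ∨ padicValRingOfIntegers p r < padicValRingOfIntegers p b) := by
  classical
  haveI := hprime
  -- the set of exponents for `b` is bounded by `l`
  have hbddb : ∀ m, b ∈ p ^ m → m ≤ l := by
    intro m hm
    by_contra hml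
    push_neg at hml
    exact hb (Ideal.pow_le_pow_right hml.le hm)
  set k := padicValRingOfIntegers p b with hk
  have hkmem : b ∈ p ^ k :=
    Nat.sSup_mem (s := {m : ℕ | b ∈ p ^ m}) ⟨0, by simp⟩ ⟨l, fun n hn => hbddb n hn⟩
  have hknot : b ∉ p ^ (k + 1) := by
    intro hmem
    have : k + 1 ≤ k := le_csSup ⟨l, fun n hn => hbddb n hn⟩ hmem
    omega
  have hkl : k < l := by
    by_contra hkl
    push_neg at hkl
    exact hb (Ideal.pow_le_pow_right hkl hkmem)
  by_cases ha : a ∈ p ^ l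
  · exact ⟨0, 0, by simpa using ha, Or.inl (Ideal.zero_mem _)⟩
  -- a ∉ p^l ; compute its valuation
  have hbdda : ∀ m, a ∈ p ^ m → m ≤ l := by
    intro m hm
    by_contra hml
    push_neg at hml
    exact ha (Ideal.pow_le_pow_right hml.le hm)
  set m := padicValRingOfIntegers p a with hm
  have hamem : a ∈ p ^ m :=
    Nat.sSup_mem (s := {n : ℕ | a ∈ p ^ n}) ⟨0, by simp⟩ ⟨l, fun n hn => hbdda n hn⟩
  by_cases hmk : m < k
  · exact ⟨0, a, by simp, Or.inr hmk⟩
  push_neg at hmk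
  -- k ≤ m : then a is divisible by b modulo p^l
  have hb0 : b ≠ 0 := by rintro rfl; exact hb ((p ^ l).zero_mem)
  have hspanb : Ideal.span {b} ≠ ⊥ := by
    simpa [Ideal.span_singleton_eq_bot] using hb0
  have hpirr : Irreducible p := (Ideal.prime_of_isPrime hp hprime).irreducible
  have hcount : (UniqueFactorizationMonoid.normalizedFactors (Ideal.span {b})).count p = k := by
    apply Ideal.count_normalizedFactors_eq
    · exact (Ideal.span_singleton_le_iff_mem _).mpr hkmem
    · exact fun h => hknot ((Ideal.span_singleton_le_iff_mem _).mp h)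
  have hsup : p ^ l ⊔ Ideal.span {b} = p ^ k := by
    rw [irreducible_pow_sup hspanb hpirr, hcount, min_eq_left hkl.le]
  have hamem' : a ∈ p ^ l ⊔ Ideal.span {b} := by
    rw [hsup]
    exact Ideal.pow_le_pow_right hmk hamem
  obtain ⟨z, hz, y, hy, hzy⟩ := Submodule.mem_sup.mp hamem'
  obtain ⟨q, hq⟩ := Ideal.mem_span_singleton'.mp hy
  refine ⟨q, 0, ?_, Or.inl (Ideal.zero_mem _)⟩
  have heq : a - (q * b + 0) = z := by rw [← hzy, ← hq]; ring
  rw [heq]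
  exact hz
end

section
/- Let p be a nonzero prime ideal of the ring of integers O of a number field K, let l ≥ 1, and let π ∈ p with π ∉ p². For every k with 0 ≤ k < l, the ideal of O/p^l generated by π̄^k (where π̄ is the image of π in O/p^l) has exactly N(p)^{l-k} elements. -/
open NumberField

set_option synthInstance.maxHeartbeats 1000000
set_option maxHeartbeats 1000000

theorem stmt_3 (K : Type*) [Field K] [NumberField K]
    (p : Ideal (RingOfIntegers K)) (hp : p ≠ ⊥) (hprime : p.IsPrime)
    (l : ℕ) (hl : 1 ≤ l)
    (π : RingOfIntegers K) (hπ : π ∈ p) (hπ2 : π ∉ p ^ 2)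
    (k : ℕ) (hk : k < l) :
    Nat.card
        (Ideal.span {(Ideal.Quotient.mk (p ^ l) π) ^ k} :
          Ideal (RingOfIntegers K ⧸ p ^ l)) =
      Ideal.absNorm p ^ (l - k) := by
  classical
  have hπ0 : π ≠ 0 := by rintro rfl; exact hπ2 (zero_mem _)
  have hirr : Irreducible p :=
    (Ideal.prime_of_isPrime hp hprime).irreducible
  have hdvd : p ∣ Ideal.span {π} := Ideal.dvd_span_singleton.mpr hπ
  have hndvd : ¬ p ^ 2 ∣ Ideal.span {π} := by
    rw [Ideal.dvd_span_singleton]; exact hπ2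
  have hcount : (UniqueFactorizationMonoid.normalizedFactors (Ideal.span {π})).count p = 1 := by
    refine UniqueFactorizationMonoid.count_normalizedFactors_eq hirr (normalize_eq p) ?_ ?_
    · simpa using hdvd
    · simpa using hndvd
  have hsb : Ideal.span {π} ≠ ⊥ := by
    simpa [Ideal.span_singleton_eq_bot] using hπ0
  have hsup : p ^ l ⊔ Ideal.span {π ^ k} = p ^ k := by
    rw [← Ideal.span_singleton_pow,
      irreducible_pow_sup (pow_ne_zero k hsb) hirr,
      UniqueFactorizationMonoid.normalizedFactors_pow, Multiset.count_nsmul, hcount,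
      mul_one, min_eq_left hk.le]
  have hmapeq : (Ideal.span {(Ideal.Quotient.mk (p ^ l) π) ^ k} :
        Ideal (RingOfIntegers K ⧸ p ^ l)) =
      Ideal.map (Ideal.Quotient.mk (p ^ l)) (p ^ k) := by
    rw [← hsup, Ideal.map_sup, Ideal.map_quotient_self, bot_sup_eq, Ideal.map_span,
      Set.image_singleton, map_pow]
  rw [hmapeq]
  have hle : p ^ l ≤ p ^ k := Ideal.pow_le_pow_right hk.le
  have hcard := Submodule.card_quotient_mul_card_quotient (p ^ k) (p ^ l) hle
  have hsame : Nat.card (Submodule.map (p ^ l).mkQ (p ^ k)) =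
      Nat.card (Ideal.map (Ideal.Quotient.mk (p ^ l)) (p ^ k)) := by
    apply Nat.card_congr
    apply Equiv.setCongr
    ext x
    simp only [Submodule.mem_map, SetLike.mem_coe, Submodule.mkQ_apply,
      Ideal.mem_map_iff_of_surjective _ Ideal.Quotient.mk_surjective]
    rfl
  have hN : Ideal.absNorm p ≠ 0 := by
    rw [← Nat.pos_iff_ne_zero, Ideal.absNorm_pos_iff_mem_nonZeroDivisors]
    exact mem_nonZeroDivisors_of_ne_zero hp
  have hql : Nat.card (RingOfIntegers K ⧸ p ^ l) = Ideal.absNorm p ^ l := by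
    rw [← Submodule.cardQuot_apply, ← Ideal.absNorm_apply, map_pow]
  have hqk : Nat.card (RingOfIntegers K ⧸ p ^ k) = Ideal.absNorm p ^ k := by
    rw [← Submodule.cardQuot_apply, ← Ideal.absNorm_apply, map_pow]
  rw [hsame, hql, hqk] at hcard
  have hsplit : Ideal.absNorm p ^ l = Ideal.absNorm p ^ (l - k) * Ideal.absNorm p ^ k := by
    rw [← pow_add, Nat.sub_add_cancel hk.le]
  rw [hsplit] at hcard
  exact Nat.eq_of_mul_eq_mul_right (Nat.pos_of_ne_zero (pow_ne_zero k hN)) hcard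
end

section
/- Let m be a nonzero ideal of the ring of integers O of a number field K and let a, b, c ∈ O with b·c - a ∈ m. Let J be the (unique) ideal of O with J·((b) + m) = (a) + m. Then N((c) + m)·N((b) + m) = N((a) + m) if and only if (c) + m = J + m (i.e. the residue class of c generates the image of J in O/m). -/
open NumberField

theorem aux_eq_of_le_of_absNorm_eq {O : Type*} [CommRing O] [IsDedekindDomain O]
    [Module.Free ℤ O] [Module.Finite ℤ O]
    {I J : Ideal O} (hIJ : J ≤ I) (hJ0 : J ≠ ⊥)
    (hn : Ideal.absNorm J = Ideal.absNorm I) : J = I := by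
  obtain ⟨L, rfl⟩ := (Ideal.dvd_iff_le).mpr hIJ
  have hI0 : I ≠ ⊥ := fun h => hJ0 (by simp [h])
  have hnI : Ideal.absNorm I ≠ 0 := by
    rwa [Ne, Ideal.absNorm_eq_zero_iff]
  rw [map_mul] at hn
  have : Ideal.absNorm L = 1 := by
    nlinarith [Nat.pos_of_ne_zero hnI]
  rw [Ideal.absNorm_eq_one_iff] at this
  rw [this, Ideal.mul_top]

theorem stmt_10_aux {O : Type*} [CommRing O] [IsDedekindDomain O]
    [Module.Free ℤ O] [Module.Finite ℤ O]
    (m : Ideal O) (hm : m ≠ ⊥)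
    (a b c : O) (h : b * c - a ∈ m)
    (J : Ideal O)
    (hJ : J * (Ideal.span {b} ⊔ m) = Ideal.span {a} ⊔ m) :
    Ideal.absNorm (Ideal.span {c} ⊔ m) * Ideal.absNorm (Ideal.span {b} ⊔ m) =
        Ideal.absNorm (Ideal.span {a} ⊔ m) ↔
      Ideal.span {c} ⊔ m = J ⊔ m := by
  have hb0 : Ideal.span {b} ⊔ m ≠ ⊥ := fun hb => hm (by
    have := le_sup_right (a := Ideal.span {b}) (b := m)
    rw [hb] at this; exact le_bot_iff.mp this)
  have hprod : (Ideal.span {c} ⊔ m) * (Ideal.span {b} ⊔ m) ≤ Ideal.span {a} ⊔ m := by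
    rw [Ideal.sup_mul, Ideal.mul_sup, Ideal.mul_sup]
    refine sup_le (sup_le ?_ ?_) (sup_le ?_ ?_)
    · rw [Ideal.span_singleton_mul_span_singleton]
      rw [Ideal.span_singleton_le_iff_mem]
      have hcb : c * b = a + (b * c - a) := by ring
      rw [hcb]
      exact Ideal.add_mem _ (Ideal.mem_sup_left (Ideal.subset_span rfl))
        (Ideal.mem_sup_right h)
    all_goals
      exact le_trans (by first | exact Ideal.mul_le_left | exact Ideal.mul_le_right)
        le_sup_right
  have hcJ : Ideal.span {c} ⊔ m ≤ J := by
    rw [← Ideal.dvd_iff_le] at hprod ⊢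
    rw [← hJ] at hprod
    exact (mul_dvd_mul_iff_right hb0).mp hprod
  have hJm : J ⊔ m = J := sup_eq_left.mpr (le_trans le_sup_right hcJ)
  rw [hJm]
  constructor
  · intro hn
    have hc0 : Ideal.span {c} ⊔ m ≠ ⊥ := fun hb => hm (by
      have := le_sup_right (a := Ideal.span {c}) (b := m)
      rw [hb] at this; exact le_bot_iff.mp this)
    have heq : (Ideal.span {c} ⊔ m) * (Ideal.span {b} ⊔ m) = Ideal.span {a} ⊔ m := by
      apply aux_eq_of_le_of_absNorm_eq hprod
      · exact mul_ne_zero hc0 hb0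
      · rw [map_mul]; exact hn
    rw [← hJ] at heq
    exact mul_right_cancel₀ hb0 heq
  · intro hc
    rw [← map_mul, hc, hJ]

theorem stmt_10 (K : Type*) [Field K] [NumberField K]
    (m : Ideal (RingOfIntegers K)) (hm : m ≠ ⊥)
    (a b c : RingOfIntegers K) (h : b * c - a ∈ m)
    (J : Ideal (RingOfIntegers K))
    (hJ : J * (Ideal.span {b} ⊔ m) = Ideal.span {a} ⊔ m) :
    Ideal.absNorm (Ideal.span {c} ⊔ m) * Ideal.absNorm (Ideal.span {b} ⊔ m) =
        Ideal.absNorm (Ideal.span {a} ⊔ m) ↔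
      Ideal.span {c} ⊔ m = J ⊔ m :=
  stmt_10_aux m hm a b c h J hJ
end

section
/- Let m be a nonzero ideal of the ring of integers O of a number field K. Then |(O/m)ˣ| / |O/m| = ∏_{p | m} (1 - 1/N(p)), the product taken over the distinct prime ideal divisors p of m; equivalently, as rational numbers, Nat.card ((O/m)ˣ) = N(m) · ∏_{p | m} (1 - 1/N(p)). -/
/-!
By the Chinese remainder theorem `O ⧸ m ≃+* ∏ O ⧸ P ^ e`, over the prime powers `P ^ e` exactly
dividing `m`, so both sides are multiplicative and it suffices to count units of `O ⧸ P ^ e`.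
There a class is a unit iff it lies outside `P ⧸ P ^ e`, an additive subgroup of index `N(P)`;
hence the units make up the fraction `1 - 1 / N(P)` of `O ⧸ P ^ e`.
-/

open NumberField UniqueFactorizationMonoid

namespace Ideal

section CommRing

variable {R : Type*} [CommRing R]

theorem natCard_units_quotient_pow_add_natCard_map (P : Ideal R) [P.IsMaximal] {e : ℕ}
    (he : e ≠ 0) [Finite (R ⧸ P ^ e)] :
    Nat.card (R ⧸ P ^ e)ˣ + Nat.card (P.map (Quotient.mk (P ^ e))) = Nat.card (R ⧸ P ^ e) := by
  set J := P.map (Quotient.mk (P ^ e))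
  have hunits : (IsUnit.submonoid (R ⧸ P ^ e) : Set (R ⧸ P ^ e)) = (J : Set (R ⧸ P ^ e))ᶜ := by
    ext y
    obtain ⟨x, rfl⟩ := Quotient.mk_surjective y
    simp only [SetLike.mem_coe, IsUnit.mem_submonoid_iff, Set.mem_compl_iff,
      Quotient.isUnit_mk_pow_iff_notMem P he, J, mem_quotient_iff_mem (pow_le_self he)]
  rw [Nat.card_congr Submonoid.unitsTypeEquivIsUnitSubmonoid.toEquiv, ← SetLike.coe_sort_coe,
    Nat.card_coe_set_eq, hunits, ← SetLike.coe_sort_coe, Nat.card_coe_set_eq,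
    Set.ncard_compl_add_ncard]

theorem natCard_quotient_pow_eq_mul_natCard_map (P : Ideal R) {e : ℕ} (he : e ≠ 0) :
    Nat.card (R ⧸ P ^ e) = Nat.card (R ⧸ P) * Nat.card (P.map (Quotient.mk (P ^ e))) := by
  rw [← Nat.card_congr (DoubleQuot.quotQuotEquivQuotOfLE (pow_le_self (I := P) he)).toEquiv]
  exact AddSubgroup.card_eq_card_quotient_mul_card_addSubgroup
    (P.map (Quotient.mk (P ^ e))).toAddSubgroup

theorem natCard_units_quotient_pow_mul_natCard_quotient (P : Ideal R) [P.IsMaximal] {e : ℕ}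
    (he : e ≠ 0) [Finite (R ⧸ P ^ e)] :
    Nat.card (R ⧸ P ^ e)ˣ * Nat.card (R ⧸ P) =
      Nat.card (R ⧸ P ^ e) * (Nat.card (R ⧸ P) - 1) := by
  have hsum := natCard_units_quotient_pow_add_natCard_map P he
  rw [natCard_quotient_pow_eq_mul_natCard_map P he] at hsum ⊢
  generalize Nat.card (R ⧸ P ^ e)ˣ = u, Nat.card (P.map (Quotient.mk (P ^ e))) = j,
    Nat.card (R ⧸ P) = q at *
  rcases q with _ | q
  · simp_all
  · obtain rfl : u = q * j := by linarith
    simp only [Nat.add_sub_cancel]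
    ring

end CommRing

section IsDedekindDomain

variable {R : Type*} [CommRing R] [IsDedekindDomain R]

theorem setOf_isPrime_dvd_eq_factors_toFinset {I : Ideal R} (hI : I ≠ ⊥) :
    {P : Ideal R | P.IsPrime ∧ P ∣ I} = (factors I).toFinset := by
  ext P
  rw [Finset.mem_coe, Multiset.mem_toFinset, factors_eq_normalizedFactors,
    mem_normalizedFactors_iff hI, Set.mem_ofPred_eq, dvd_iff_le]

theorem natCard_units_quotient_eq_prod_factors {I : Ideal R} (hI : I ≠ ⊥) :
    Nat.card (R ⧸ I)ˣ =
      ∏ P ∈ (factors I).toFinset, Nat.card (R ⧸ P ^ (factors I).count P)ˣ := by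
  rw [Nat.card_congr ((Units.mapEquiv (IsDedekindDomain.quotientEquivPiFactors hI).toMulEquiv).trans
      MulEquiv.piUnits).toEquiv, Nat.card_pi]
  exact Finset.prod_coe_sort _ fun P ↦ Nat.card (R ⧸ P ^ (factors I).count P)ˣ

end IsDedekindDomain

section absNorm

variable {S : Type*} [CommRing S] [IsDedekindDomain S] [Module.Free ℤ S]

theorem absNorm_eq_prod_factors {I : Ideal S} (hI : I ≠ ⊥) :
    absNorm I = ∏ P ∈ (factors I).toFinset, absNorm (P ^ (factors I).count P) := by
  conv_lhs => rw [← associated_iff_eq.mp (factors_pow_count_prod hI)]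
  exact map_prod absNorm _ _

variable [Module.Finite ℤ S]

theorem natCard_units_quotient_pow_eq {P : Ideal S} (hP : Prime P) {e : ℕ} (he : e ≠ 0) :
    (Nat.card (S ⧸ P ^ e)ˣ : ℚ) = absNorm (P ^ e) * (1 - 1 / absNorm P) := by
  have : P.IsMaximal := (isPrime_of_prime hP).isMaximal hP.ne_zero
  have hP0 : absNorm P ≠ 0 := absNorm_eq_zero_iff.not.mpr hP.ne_zero
  have : Finite (S ⧸ P ^ e) := (absNorm_ne_zero_iff _).mp (by rw [map_pow]; exact pow_ne_zero _ hP0)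
  have key : Nat.card (S ⧸ P ^ e)ˣ * absNorm P = absNorm (P ^ e) * (absNorm P - 1) :=
    natCard_units_quotient_pow_mul_natCard_quotient P he
  have hq : (absNorm P : ℚ) ≠ 0 := Nat.cast_ne_zero.mpr hP0
  field_simp
  rw [← Nat.cast_one, ← Nat.cast_sub (Nat.one_le_iff_ne_zero.mpr hP0)]
  exact_mod_cast key

end absNorm

end Ideal

theorem stmt_13 (K : Type*) [Field K] [NumberField K]
    (m : Ideal (RingOfIntegers K)) (hm : m ≠ ⊥) :
    (Nat.card ((RingOfIntegers K ⧸ m)ˣ) : ℚ) =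
      (Ideal.absNorm m : ℚ) *
        ∏ᶠ p ∈ {p : Ideal (RingOfIntegers K) | p.IsPrime ∧ p ∣ m},
          (1 - 1 / (Ideal.absNorm p : ℚ)) := by
  rw [Ideal.setOf_isPrime_dvd_eq_factors_toFinset hm, finprod_mem_coe_finset,
    Ideal.natCard_units_quotient_eq_prod_factors hm, Ideal.absNorm_eq_prod_factors hm,
    Nat.cast_prod, Nat.cast_prod, ← Finset.prod_mul_distrib]
  refine Finset.prod_congr rfl fun P hP ↦ ?_
  rw [Multiset.mem_toFinset] at hP
  exact Ideal.natCard_units_quotient_pow_eq (prime_of_factor P hP) (Multiset.count_ne_zero.mpr hP)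
end

section
/- Let m be a nonzero ideal of the ring of integers O of a number field K, let 𝔞 be a nonzero ideal of O, set 𝔟 = 𝔞 + m and N = N(m), and let q : O → O/(N²) be the quotient map modulo the principal ideal generated by N². Then among the residue classes in the image q(𝔟), the proportion of classes having a representative c ∈ 𝔟 with c ∉ 𝔟·p is exactly 1 - 1/N(p) for each prime ideal p dividing m; precisely, Nat.card {x : x = q(c) for some c ∈ 𝔟 with c ∉ 𝔟·p} · N(p) = Nat.card (q(𝔟)) · (N(p) - 1). -/
open NumberField

set_option synthInstance.maxHeartbeats 1000000

/-! Since `J = (N²) ⊆ 𝔟·p`, the classes of elements of `𝔟 \ 𝔟·p` are exactly `q(𝔟) \ q(𝔟·p)`.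
The third isomorphism theorem gives `|q(𝔟)| · N(𝔟) = N(J) = |q(𝔟·p)| · N(𝔟) · N(p)`, so
`|q(𝔟)| = N(p) · |q(𝔟·p)|` and the difference has `|q(𝔟)| · (1 - 1/N(p))` elements. -/

namespace Ideal

theorem card_image_mk_mul_card_quotient {R : Type*} [CommRing R] {I J : Ideal R} (hJI : J ≤ I) :
    Nat.card (Quotient.mk J '' I) * Nat.card (R ⧸ I) = Nat.card (R ⧸ J) := by
  rw [← Submodule.card_quotient_mul_card_quotient I J hJI]
  rfl

theorem setOf_mk_eq_image_sdiff_image {R : Type*} [CommRing R] {I I' J : Ideal R} (hJI' : J ≤ I') :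
    {x : R ⧸ J | ∃ c ∈ I, c ∉ I' ∧ Quotient.mk J c = x} =
      Quotient.mk J '' I \ Quotient.mk J '' I' := by
  ext x
  constructor
  · rintro ⟨c, hcI, hcI', rfl⟩
    refine ⟨⟨c, hcI, rfl⟩, ?_⟩
    rintro ⟨c', hc'I', hc'c⟩
    have hsub : c - c' ∈ J := Quotient.eq.mp hc'c.symm
    exact hcI' (by simpa using add_mem (hJI' hsub) hc'I')
  · rintro ⟨⟨c, hcI, rfl⟩, hnot⟩
    exact ⟨c, hcI, fun hcI' => hnot ⟨c, hcI', rfl⟩, rfl⟩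

variable {S : Type*} [CommRing S] [IsDedekindDomain S] [Module.Free ℤ S]

theorem card_image_mk_eq_absNorm_mul {I P J : Ideal S} [Finite (S ⧸ J)] (hJ : J ≤ I * P) :
    Nat.card (Quotient.mk J '' I) =
      absNorm P * Nat.card (Quotient.mk J '' (I * P : Ideal S)) := by
  have hJI : J ≤ I := hJ.trans mul_le_left
  have hI := card_image_mk_mul_card_quotient hJI
  have hIP := card_image_mk_mul_card_quotient hJ
  simp only [← Submodule.cardQuot_apply, ← absNorm_apply, map_mul] at hI hIP
  have hJ0 : absNorm J ≠ 0 := (absNorm_ne_zero_iff J).mpr ‹_›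
  have hI0 : absNorm I ≠ 0 := right_ne_zero_of_mul (hI ▸ hJ0)
  apply Nat.eq_of_mul_eq_mul_right (Nat.pos_of_ne_zero hI0)
  rw [hI, ← hIP]
  ring

theorem card_setOf_mk_notMem_mul_mul_absNorm {I P J : Ideal S} [Finite (S ⧸ J)]
    (hJ : J ≤ I * P) :
    Nat.card {x : S ⧸ J | ∃ c ∈ I, c ∉ I * P ∧ Quotient.mk J c = x} * absNorm P =
      Nat.card (Quotient.mk J '' I) * (absNorm P - 1) := by
  have hsub : Quotient.mk J '' (I * P : Ideal S) ⊆ Quotient.mk J '' I :=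
    Set.image_mono mul_le_left
  rw [setOf_mk_eq_image_sdiff_image hJ, Nat.card_coe_set_eq, Set.ncard_sdiff hsub,
    ← Nat.card_coe_set_eq, ← Nat.card_coe_set_eq, card_image_mk_eq_absNorm_mul hJ]
  generalize Nat.card (Quotient.mk J '' (I * P : Ideal S)) = b
  rw [Nat.sub_mul, Nat.mul_sub, mul_one, mul_comm b]

end Ideal

theorem stmt_14_general (K : Type*) [Field K] [NumberField K]
    (m 𝔞 : Ideal (RingOfIntegers K)) (hm : m ≠ ⊥)
    (p : Ideal (RingOfIntegers K)) (hpm : p ∣ m) :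
    Nat.card {x : RingOfIntegers K ⧸
          Ideal.span {((Ideal.absNorm m : RingOfIntegers K)) ^ 2} |
        ∃ c ∈ 𝔞 ⊔ m, c ∉ (𝔞 ⊔ m) * p ∧
          Ideal.Quotient.mk (Ideal.span {((Ideal.absNorm m : RingOfIntegers K)) ^ 2}) c = x} *
        Ideal.absNorm p =
      Nat.card
          ((Ideal.Quotient.mk (Ideal.span {((Ideal.absNorm m : RingOfIntegers K)) ^ 2})) ''
            ((𝔞 ⊔ m : Ideal (RingOfIntegers K)) : Set (RingOfIntegers K))) *
        (Ideal.absNorm p - 1) := by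
  have hNm : Ideal.absNorm m ≠ 0 := by rwa [Ne, Ideal.absNorm_eq_zero_iff]
  have : Finite (RingOfIntegers K ⧸ Ideal.span {((Ideal.absNorm m : RingOfIntegers K)) ^ 2}) :=
    Ideal.finiteQuotientOfFreeOfNeBot _ (by simpa using hNm)
  apply Ideal.card_setOf_mk_notMem_mul_mul_absNorm
  rw [Ideal.span_le, Set.singleton_subset_iff, sq]
  exact Ideal.mul_mem_mul (Ideal.mem_sup_right (Ideal.absNorm_mem m))
    (Ideal.le_of_dvd hpm (Ideal.absNorm_mem m))

theorem stmt_14 (K : Type*) [Field K] [NumberField K]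
    (m 𝔞 : Ideal (RingOfIntegers K)) (hm : m ≠ ⊥) (h𝔞 : 𝔞 ≠ ⊥)
    (p : Ideal (RingOfIntegers K)) (hp : p.IsPrime) (hpm : p ∣ m) :
    Nat.card {x : RingOfIntegers K ⧸
          Ideal.span {((Ideal.absNorm m : RingOfIntegers K)) ^ 2} |
        ∃ c ∈ 𝔞 ⊔ m, c ∉ (𝔞 ⊔ m) * p ∧
          Ideal.Quotient.mk (Ideal.span {((Ideal.absNorm m : RingOfIntegers K)) ^ 2}) c = x} *
        Ideal.absNorm p =
      Nat.card
          ((Ideal.Quotient.mk (Ideal.span {((Ideal.absNorm m : RingOfIntegers K)) ^ 2})) ''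
            ((𝔞 ⊔ m : Ideal (RingOfIntegers K)) : Set (RingOfIntegers K))) *
        (Ideal.absNorm p - 1) :=
  stmt_14_general K m 𝔞 hm p hpm
end

section
/- Let m be a nonzero ideal of the ring of integers O of a number field K, let M be an O-submodule of O^m with m·O^m ⊆ M, and let π_m : O^m → (O/m)^m be coordinatewise reduction. If C is an m × m matrix over O such that π_m(C) is a strong echelon form of π_m(M), then M equals the O-span of the rows of C together with m·O^m, i.e. M = span_O(C_1, …, C_m) ⊔ m·O^m. -/
open NumberField

set_option synthInstance.maxHeartbeats 1000000

/-- The submodule of row vectors in `Fin m → R` whose coordinates with (0-based) index `≥ k`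
(i.e. the last `m - k` coordinates) are zero. -/
def zeroFrom (R : Type*) [CommRing R] (m k : ℕ) : Submodule R (Fin m → R) where
  carrier := {v | ∀ j : Fin m, k ≤ (j : ℕ) → v j = 0}
  add_mem' := by
    intro v w hv hw j hj
    simp [hv j hj, hw j hj]
  zero_mem' := by
    intro j _
    rfl
  smul_mem' := by
    intro c v hv j hj
    simp [hv j hj]

/-- `H` is a strong echelon form of the module `M ⊆ R^m` (rows indexed `0, …, n-1`,
columns `0, …, m-1`, 0-based):
(S1) each row `i` with `i < m` is zero or has its last nonzero entry on the diagonal,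
and each row with index `≥ m` is zero;
(S2) for `1 ≤ k ≤ m`, the first `k` rows of `H` generate the submodule `S_{m-k}(M)` of
elements of `M` whose last `m - k` coordinates vanish. -/
def IsStrongEchelonForm {R : Type*} [CommRing R] {n m : ℕ}
    (H : Matrix (Fin n) (Fin m) R) (M : Submodule R (Fin m → R)) : Prop :=
  (∀ i : Fin n, ∀ hi : (i : ℕ) < m,
      (∀ j : Fin m, H i j = 0) ∨
        ((∀ j : Fin m, (i : ℕ) < (j : ℕ) → H i j = 0) ∧ H i ⟨(i : ℕ), hi⟩ ≠ 0)) ∧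
  (∀ i : Fin n, m ≤ (i : ℕ) → ∀ j : Fin m, H i j = 0) ∧
  (∀ k : ℕ, 1 ≤ k → k ≤ m →
      Submodule.span R {v | ∃ i : Fin n, (i : ℕ) < k ∧ v = H i} = M ⊓ zeroFrom R m k)

/-- Coordinatewise reduction `R^m → (R/I)^m` as a semilinear map over the quotient map. -/
def piQuotient {R : Type*} [CommRing R] (I : Ideal R) (m : ℕ) :
    (Fin m → R) →ₛₗ[Ideal.Quotient.mk I] (Fin m → R ⧸ I) where
  toFun v := fun j => Ideal.Quotient.mk I (v j)
  map_add' v w := by funext j; simp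
  map_smul' c v := by funext j; simp

set_option maxHeartbeats 1000000 in
theorem stmt_17 (K : Type*) [Field K] [NumberField K]
    (m : Ideal (RingOfIntegers K)) (hm : m ≠ ⊥) (k : ℕ)
    (M : Submodule (RingOfIntegers K) (Fin k → RingOfIntegers K))
    (hMm : (Submodule.pi Set.univ fun _ : Fin k => m) ≤ M)
    (C : Matrix (Fin k) (Fin k) (RingOfIntegers K))
    (hC : IsStrongEchelonForm (C.map (Ideal.Quotient.mk m))
      (Submodule.map (piQuotient m k) M)) :
    M = Submodule.span (RingOfIntegers K) (Set.range fun i : Fin k => C i) ⊔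
          (Submodule.pi Set.univ fun _ : Fin k => m) := by
  rcases Nat.eq_zero_or_pos k with hk | hk
  · subst hk
    ext v
    have hv : v = 0 := funext fun j => absurd j.isLt (by omega)
    subst hv
    exact iff_of_true (Submodule.zero_mem M) (Submodule.zero_mem _)
  · set π := piQuotient m k with hπ
    have hker : LinearMap.ker π = Submodule.pi Set.univ fun _ : Fin k => m := by
      ext v
      simp [LinearMap.mem_ker, hπ, piQuotient, Submodule.mem_pi, funext_iff,
        Ideal.Quotient.eq_zero_iff_mem]
    have hzt : zeroFrom (RingOfIntegers K ⧸ m) k k = ⊤ :=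
      eq_top_iff.mpr fun v _ j hj => absurd j.isLt (not_lt.mpr hj)
    have hset : {v | ∃ i : Fin k, (i : ℕ) < k ∧ v = (C.map (Ideal.Quotient.mk m)) i} =
        Set.range fun i : Fin k => π (C i) := by
      ext v
      constructor
      · rintro ⟨i, -, rfl⟩; exact ⟨i, rfl⟩
      · rintro ⟨i, rfl⟩; exact ⟨i, i.isLt, rfl⟩
    have hmapM : Submodule.map π M =
        Submodule.span (RingOfIntegers K ⧸ m) (Set.range fun i : Fin k => π (C i)) := by
      have h := hC.2.2 k hk le_rfl
      rw [hset, hzt, inf_top_eq] at h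
      exact h.symm
    have hN : Submodule.map π
          (Submodule.span (RingOfIntegers K) (Set.range fun i : Fin k => C i) ⊔
            Submodule.pi Set.univ fun _ : Fin k => m) =
        Submodule.span (RingOfIntegers K ⧸ m) (Set.range fun i : Fin k => π (C i)) := by
      have hkb : Submodule.map π (LinearMap.ker π) = ⊥ :=
        le_bot_iff.mp (Submodule.map_le_iff_le_comap.mpr (le_refl (LinearMap.ker π)))
      rw [Submodule.map_sup, Submodule.map_span, ← hker, hkb, sup_bot_eq, ← Set.range_comp]
      rfl
    have h1 : M ⊔ LinearMap.ker π =
        (Submodule.span (RingOfIntegers K) (Set.range fun i : Fin k => C i) ⊔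
          Submodule.pi Set.univ fun _ : Fin k => m) ⊔ LinearMap.ker π := by
      rw [← Submodule.comap_map_eq, ← Submodule.comap_map_eq, hmapM, hN]
    have h2 : LinearMap.ker π ≤ M := by rw [hker]; exact hMm
    have h3 : LinearMap.ker π ≤
        Submodule.span (RingOfIntegers K) (Set.range fun i : Fin k => C i) ⊔
          Submodule.pi Set.univ fun _ : Fin k => m := by
      rw [hker]; exact le_sup_right
    rwa [sup_eq_left.mpr h2, sup_eq_left.mpr h3] at h1
end

section
/- Let 𝔞 be a nonzero ideal of the ring of integers O of a number field K, and suppose that N(𝔞) = min(ℤ_{≥1} ∩ 𝔞), i.e. the absolute norm of 𝔞 equals the smallest positive rational integer contained in 𝔞. Then O/𝔞 is isomorphic as a ring to ℤ/N(𝔞)ℤ, i.e. there is a ring isomorphism O ⧸ 𝔞 ≃+* ZMod (N(𝔞)), induced by the canonical map ℤ → O/𝔞 (so O/𝔞 is generated by 1). -/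
/-! The characteristic of `O ⧸ 𝔞` is the least positive rational integer in `𝔞`, so the hypothesis says
that it equals the cardinality `N(𝔞)` of `O ⧸ 𝔞`; a finite ring whose characteristic equals its
cardinality is `ZMod` of it, via the canonical map. -/

open NumberField

theorem ringChar_eq_sInf {R : Type*} [NonAssocSemiring R] (h : ∃ n : ℕ, 0 < n ∧ (n : R) = 0) :
    ringChar R = sInf {n : ℕ | 0 < n ∧ (n : R) = 0} := by
  obtain ⟨n, hn, hn0⟩ := h
  have hpos : 0 < ringChar R := Nat.pos_of_dvd_of_pos (ringChar.dvd hn0) hn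
  refine le_antisymm ?_ (Nat.sInf_le ⟨hpos, ringChar.Nat.cast_ringChar⟩)
  exact le_csInf ⟨n, hn, hn0⟩ fun m ⟨hm, hm0⟩ ↦ Nat.le_of_dvd hm (ringChar.dvd hm0)

theorem Ideal.ringChar_quotient {R : Type*} [CommRing R] {I : Ideal R}
    (h : ∃ n : ℕ, 0 < n ∧ (n : R) ∈ I) :
    ringChar (R ⧸ I) = sInf {n : ℕ | 0 < n ∧ (n : R) ∈ I} := by
  simp only [← Ideal.Quotient.eq_zero_iff_mem, map_natCast] at h ⊢
  exact ringChar_eq_sInf h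

theorem stmt_19 (K : Type*) [Field K] [NumberField K]
    (𝔞 : Ideal (RingOfIntegers K)) (h𝔞 : 𝔞 ≠ ⊥)
    (hmin : Ideal.absNorm 𝔞 = sInf {n : ℕ | 0 < n ∧ (n : RingOfIntegers K) ∈ 𝔞}) :
    ∃ e : (RingOfIntegers K ⧸ 𝔞) ≃+* ZMod (Ideal.absNorm 𝔞),
      ∀ n : ℤ, e (n : RingOfIntegers K ⧸ 𝔞) = (n : ZMod (Ideal.absNorm 𝔞)) := by
  have hN : Ideal.absNorm 𝔞 ≠ 0 := Ideal.absNorm_eq_zero_iff.not.mpr h𝔞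
  have : CharP (RingOfIntegers K ⧸ 𝔞) (Ideal.absNorm 𝔞) := ringChar.of_eq <| by
    rw [Ideal.ringChar_quotient ⟨_, Nat.pos_of_ne_zero hN, 𝔞.absNorm_mem⟩, hmin]
  have := (Ideal.absNorm_ne_zero_iff 𝔞).mp hN
  let := Fintype.ofFinite (RingOfIntegers K ⧸ 𝔞)
  have hcard : Fintype.card (RingOfIntegers K ⧸ 𝔞) = Ideal.absNorm 𝔞 := by
    rw [← Nat.card_eq_fintype_card, Ideal.absNorm_apply, Submodule.cardQuot_apply]
  exact ⟨(ZMod.ringEquiv _ hcard).symm, fun n ↦ map_intCast _ n⟩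
end
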